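/- Let A be a p-algebra and a, b ∈ A. If for every congruence θ on A having exactly two equivalence classes one has (a* θ ⊤ if and only if b* θ ⊤), then a* = b*. -/
import Mathlib


variable {A : Type*}

/-- A congruence of a p-algebra `(A, ⊓, ⊔, *, ⊥, ⊤)`: an equivalence relation
compatible with meet, join and the pseudocomplementation `star`. -/
def IsPCong [Lattice A] (star : A → A) (θ : A → A → Prop) : Prop :=
  Equivalence θ ∧
  (∀ a b c d : A, θ a b → θ c d → θ (a ⊓ c) (b ⊓ d)) ∧
  (∀ a b c d : A, θ a b → θ c d → θ (a ⊔ c) (b ⊔ d)) ∧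
  (∀ a b : A, θ a b → θ (star a) (star b))

/-- A completely meet-irreducible congruence: a congruence `μ` such that whenever `μ`
is the intersection of a (possibly empty) family of congruences, `μ` belongs to the
family.  (Taking the empty family, such a `μ` is never the total relation.) -/
def IsCMI [Lattice A] (star : A → A) (μ : A → A → Prop) : Prop :=
  IsPCong star μ ∧
  ∀ S : Set (A → A → Prop), (∀ θ ∈ S, IsPCong star θ) →
    (μ = fun a b => ∀ θ ∈ S, θ a b) → μ ∈ S

/-- A relation has exactly two equivalence classes. -/
def HasTwoClasses (θ : A → A → Prop) : Prop :=
  ∃ a b : A, ¬ θ a b ∧ ∀ c : A, θ c a ∨ θ c b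

/-- A prime filter of a lattice: proper, nonempty, upward closed, closed under `⊓`,
and `a ⊔ b ∈ F` implies `a ∈ F` or `b ∈ F`. -/
def IsPrimeFilter [Lattice A] (F : Set A) : Prop :=
  F.Nonempty ∧ F ≠ Set.univ ∧ (∀ a b : A, a ∈ F → a ≤ b → b ∈ F) ∧
  (∀ a b : A, a ∈ F → b ∈ F → a ⊓ b ∈ F) ∧
  (∀ a b : A, a ⊔ b ∈ F → a ∈ F ∨ b ∈ F)

section Aux

variable [DistribLattice A] [BoundedOrder A] (star : A → A)
  (hp : ∀ x y : A, x ⊓ y = ⊥ ↔ x ≤ star y)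

include hp

lemma meet_star' (x : A) : x ⊓ star x = ⊥ := by
  rw [inf_comm]; exact le_bot_iff.1 (((hp (star x) x).2 le_rfl).le)

lemma star_anti' {x y : A} (hxy : x ≤ y) : star y ≤ star x := by
  refine (hp (star y) x).1 ?_
  have h := meet_star' star hp y
  rw [inf_comm] at h
  exact le_bot_iff.1 (le_trans (inf_le_inf_left _ hxy) h.le)

lemma le_star_star' (x : A) : x ≤ star (star x) :=
  (hp x (star x)).1 (meet_star' star hp x)

lemma star_star_star' (x : A) : star (star (star x)) = star x :=
  le_antisymm (star_anti' star hp (le_star_star' star hp x)) (le_star_star' star hp (star x))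

lemma star_top' : star ⊤ = ⊥ := by
  have h := meet_star' star hp ⊤; rwa [top_inf_eq] at h

/-- Key separation lemma: if `¬ star a ≤ star b` then there is a prime filter `P`
with the star-swap property containing `star a` but not `star b`. -/
lemma key_sep (a b : A) (hab : ¬ star a ≤ star b) :
    ∃ P : Set A, (∀ x y : A, x ∈ P → x ≤ y → y ∈ P) ∧
      (∀ x y : A, x ∈ P → y ∈ P → x ⊓ y ∈ P) ∧
      (∀ x y : A, x ⊔ y ∈ P → x ∈ P ∨ y ∈ P) ∧
      (∀ x : A, x ∈ P ↔ star x ∉ P) ∧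
      (⊤ : A) ∈ P ∧ star a ∈ P ∧ star b ∉ P := by
  classical
  -- `G`: the filter generated by the dense elements together with `star (star b)`
  set G : Set A := {x | ∃ d : A, star d = ⊥ ∧ d ⊓ star (star b) ≤ x} with hG
  have hGup : ∀ {x y : A}, x ≤ y → x ∈ G → y ∈ G := by
    rintro x y hxy ⟨d, hd, hdx⟩; exact ⟨d, hd, hdx.trans hxy⟩
  have hGmem : ∀ {x : A}, x ∈ G → ¬ x ≤ star (star a) := by
    rintro x ⟨d, hd, hdx⟩ hxa
    apply hab
    have h1 : d ⊓ star (star b) ≤ star (star a) := hdx.trans hxa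
    have h2 : star (star (star a)) ≤ star (d ⊓ star (star b)) := star_anti' star hp h1
    rw [star_star_star' star hp] at h2
    have h3 : star (d ⊓ star (star b)) ≤ star b := by
      have hm : star (d ⊓ star (star b)) ⊓ (d ⊓ star (star b)) = ⊥ := by
        rw [inf_comm]; exact meet_star' star hp _
      have h4 : star (d ⊓ star (star b)) ⊓ star (star b) ⊓ d = ⊥ := by
        rw [inf_assoc, inf_comm (star (star b)) d]
        exact hm
      have h5 : star (d ⊓ star (star b)) ⊓ star (star b) ≤ star d := (hp _ _).1 h4
      rw [hd, le_bot_iff] at h5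
      have h6 := (hp (star (d ⊓ star (star b))) (star (star b))).1 h5
      rwa [star_star_star' star hp] at h6
    exact h2.trans h3
  have hGne : G.Nonempty := ⟨⊤, ⊤, star_top' star hp, le_top⟩
  have hGdir : DirectedOn (· ≥ ·) G := by
    rintro x ⟨d, hd, hdx⟩ y ⟨e, he, hey⟩
    refine ⟨(d ⊓ e) ⊓ star (star b), ⟨d ⊓ e, ?_, le_rfl⟩, ?_, ?_⟩
    · have h1 : star (d ⊓ e) ⊓ d ≤ star e := by
        refine (hp _ _).1 ?_
        rw [inf_assoc, inf_comm]
        exact meet_star' star hp (d ⊓ e)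
      rw [he, le_bot_iff] at h1
      have h2 := (hp (star (d ⊓ e)) d).1 h1
      rw [hd, le_bot_iff] at h2
      exact h2
    · exact le_trans (le_inf ((inf_le_left).trans inf_le_left) inf_le_right) hdx
    · exact le_trans (le_inf ((inf_le_left).trans inf_le_right) inf_le_right) hey
  have hGpf : Order.IsPFilter G := Order.IsPFilter.of_def hGne hGdir hGup
  set Fil : Order.PFilter A := hGpf.toPFilter with hFil
  have hFilmem : ∀ x : A, x ∈ Fil ↔ x ∈ G := fun x => Iff.rfl
  set I : Order.Ideal A := Order.Ideal.principal (star (star a)) with hI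
  have hdisj : Disjoint (Fil : Set A) (I : Set A) := by
    rw [Set.disjoint_left]
    intro x hxF hxI
    exact hGmem ((hFilmem x).1 hxF) (Order.Ideal.mem_principal.1 hxI)
  obtain ⟨J, hJprime, hIJ, hJdisj⟩ :=
    DistribLattice.prime_ideal_of_disjoint_filter_ideal hdisj
  refine ⟨{x | x ∉ (J : Set A)}, ?_, ?_, ?_, ?_, ?_, ?_, ?_⟩
  -- helper facts
  case _ => -- upward closed
    intro x y hx hxy hy
    exact hx (J.lower hxy hy)
  case _ => -- meet closed
    intro x y hx hy hxy
    rcases hJprime.mem_or_mem hxy with h | h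
    exacts [hx h, hy h]
  case _ => -- join prime
    intro x y hxy
    by_contra hc
    push_neg at hc
    obtain ⟨hx, hy⟩ := hc
    simp only [Set.mem_setOf_eq, not_not] at hx hy
    exact hxy (Order.Ideal.sup_mem hx hy)
  case _ => -- star-swap
    have hGP : ∀ {x : A}, x ∈ G → x ∉ (J : Set A) := by
      intro x hx
      exact Set.disjoint_left.1 hJdisj ((hFilmem x).2 hx)
    intro x
    simp only [Set.mem_setOf_eq, not_not]
    constructor
    · -- x ∉ J → star x ∈ J
      intro hx
      by_contra hsx
      rcases hJprime.mem_or_mem (x := x) (y := star x)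
        (by rw [meet_star' star hp x]; exact J.bot_mem) with h | h
      exacts [hx h, hsx h]
    · -- star x ∈ J → x ∉ J
      intro hsxJ hx
      have hdense2 : x ⊔ star x ∈ G := by
        refine ⟨x ⊔ star x, ?_, inf_le_left⟩
        refine le_bot_iff.1 ?_
        have h1 : star (x ⊔ star x) ≤ star x := star_anti' star hp le_sup_left
        have h2 : star (x ⊔ star x) ≤ star (star x) := star_anti' star hp le_sup_right
        calc star (x ⊔ star x) ≤ star x ⊓ star (star x) := le_inf h1 h2
          _ = ⊥ := meet_star' star hp (star x)
      exact hGP hdense2 (J.sup_mem hx hsxJ)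
  case _ => -- ⊤ ∈ P
    exact Set.disjoint_left.1 hJdisj ((hFilmem ⊤).2 ⟨⊤, star_top' star hp, le_top⟩)
  case _ => -- star a ∈ P : star a ∉ J. Since star (star a) ∈ J and star a ⊓ star (star a) = ⊥...
    intro hsa
    -- star a ∈ J and star(star a) ∈ J would give star a ⊔ star(star a) ∈ J, but it is dense.
    have hssa : star (star a) ∈ (J : Set A) :=
      hIJ (Order.Ideal.mem_principal.2 le_rfl)
    have hdense : star a ⊔ star (star a) ∈ G := by
      refine ⟨star a ⊔ star (star a), ?_, inf_le_left⟩
      refine le_bot_iff.1 ?_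
      have h1 : star (star a ⊔ star (star a)) ≤ star (star a) :=
        star_anti' star hp le_sup_left
      have h2 : star (star a ⊔ star (star a)) ≤ star (star (star a)) :=
        star_anti' star hp le_sup_right
      rw [star_star_star' star hp] at h2
      calc star (star a ⊔ star (star a)) ≤ star a ⊓ star (star a) := le_inf h2 h1
        _ = ⊥ := meet_star' star hp (star a)
    exact Set.disjoint_left.1 hJdisj ((hFilmem _).2 hdense) (J.sup_mem hsa hssa)
  case _ => -- star b ∉ P, i.e. star b ∈ J
    have hssb : star (star b) ∉ (J : Set A) :=
      Set.disjoint_left.1 hJdisj ((hFilmem _).2 ⟨⊤, star_top' star hp, by simp⟩)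
    -- star b ⊓ star (star b) = ⊥ ∈ J, prime
    simp only [Set.mem_setOf_eq, not_not]
    rcases hJprime.mem_or_mem (x := star b) (y := star (star b))
      (by rw [meet_star' star hp (star b)]; exact J.bot_mem) with h | h
    · exact h
    · exact absurd h hssb

lemma half (a b : A)
    (h : ∀ θ : A → A → Prop, IsPCong star θ → HasTwoClasses θ →
      (θ (star a) ⊤ → θ (star b) ⊤)) :
    star a ≤ star b := by
  by_contra hab
  obtain ⟨P, hup, hmeet, hjoin, hswap, htop, hsa, hsb⟩ := key_sep star hp a b hab
  set θ : A → A → Prop := fun x y => (x ∈ P ↔ y ∈ P) with hθ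
  have hmemiff : ∀ x y : A, x ⊓ y ∈ P ↔ (x ∈ P ∧ y ∈ P) := by
    intro x y
    exact ⟨fun hxy => ⟨hup _ _ hxy inf_le_left, hup _ _ hxy inf_le_right⟩,
      fun ⟨hx, hy⟩ => hmeet _ _ hx hy⟩
  have hjoiniff : ∀ x y : A, x ⊔ y ∈ P ↔ (x ∈ P ∨ y ∈ P) := by
    intro x y
    exact ⟨hjoin x y, fun hxy => hxy.elim (fun hx => hup _ _ hx le_sup_left)
      (fun hy => hup _ _ hy le_sup_right)⟩
  have hcong : IsPCong star θ := by
    refine ⟨⟨fun x => Iff.rfl, fun h => h.symm, fun h1 h2 => h1.trans h2⟩, ?_, ?_, ?_⟩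
    · intro x y z w hxy hzw
      simp only [hθ, hmemiff]
      exact and_congr hxy hzw
    · intro x y z w hxy hzw
      simp only [hθ, hjoiniff]
      exact or_congr hxy hzw
    · intro x y hxy
      have h1 := hswap x
      have h2 := hswap y
      have h3 : x ∈ P ↔ y ∈ P := hxy
      show star x ∈ P ↔ star y ∈ P
      tauto
  have htwo : HasTwoClasses θ := by
    refine ⟨⊤, ⊥, ?_, ?_⟩
    · simp only [hθ]
      intro hc
      have hbotP : (⊥ : A) ∉ P := by
        intro hb
        exact ((hswap ⊥).1 hb) (hup _ _ hb bot_le)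
      exact hbotP (hc.1 htop)
    · intro c
      by_cases hc : c ∈ P
      · exact Or.inl (by simp only [hθ]; exact ⟨fun _ => htop, fun _ => hc⟩)
      · refine Or.inr ?_
        simp only [hθ]
        constructor
        · intro h'; exact absurd h' hc
        · intro h'
          exfalso
          exact ((hswap ⊥).1 h') (hup _ _ h' bot_le)
  have := h θ hcong htwo ⟨fun _ => htop, fun _ => hsa⟩
  exact hsb (this.2 htop)

end Aux

/-- If `a*` and `b*` are related to `⊤` by exactly the same two-class congruences,
then `a* = b*`. -/
theorem stmt18 [DistribLattice A] [BoundedOrder A] (star : A → A)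
    (hp : ∀ x y : A, x ⊓ y = ⊥ ↔ x ≤ star y) (a b : A)
    (h : ∀ θ : A → A → Prop, IsPCong star θ → HasTwoClasses θ →
      (θ (star a) ⊤ ↔ θ (star b) ⊤)) :
    star a = star b := by
  refine le_antisymm ?_ ?_
  · exact half star hp a b (fun θ hc ht => (h θ hc ht).1)
  · exact half star hp b a (fun θ hc ht => (h θ hc ht).2)
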